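/- For a Bell-diagonal two-qubit state ρ with correlation coefficients c₁, c₂, c₃ and c = max(|c₁|,|c₂|,|c₃|) ≤ 1, the quantum mutual information equals I(ρ) = 2 + Σ_{k=0}^{3} λ_k log₂ λ_k where λ_k are the eigenvalues of ρ, and the quantity C(ρ) = ((1−c)/2)log₂(1−c) + ((1+c)/2)log₂(1+c) satisfies 0 ≤ C(ρ) ≤ I(ρ). -/

import Mathlib

/-!
The four Pauli products `σᵢ ⊗ σᵢ` are simultaneously diagonalised by the Bell basis, so the
spectrum of `ρ` is `λ₀, …, λ₃`, while both marginals are maximally mixed and have entropy `1`;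
this gives `I(ρ) = 2 - S(ρ)`. For the bound, pick `i` with `|cᵢ| = c` and split the eigenvalues
into two pairs with sums `(1 - cᵢ)/2` and `(1 + cᵢ)/2`. Midpoint convexity of `x log₂ x` bounds
the contribution of each pair from below, and the two bounds add up to `C(ρ) - 2`. Midpoint
convexity at the points `1 ± c` gives `C(ρ) ≥ 0`.
-/

open Matrix BigOperators Kronecker ComplexOrder

noncomputable def pauliX : Matrix (Fin 2) (Fin 2) ℂ := !![0, 1; 1, 0]
noncomputable def pauliY : Matrix (Fin 2) (Fin 2) ℂ := !![0, -Complex.I; Complex.I, 0]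
noncomputable def pauliZ : Matrix (Fin 2) (Fin 2) ℂ := !![1, 0; 0, -1]

noncomputable def bellDiag (c₁ c₂ c₃ : ℝ) :
    Matrix (Fin 2 × Fin 2) (Fin 2 × Fin 2) ℂ :=
  (1 / 4 : ℂ) • ((1 : Matrix (Fin 2 × Fin 2) (Fin 2 × Fin 2) ℂ)
    + (c₁ : ℂ) • (pauliX ⊗ₖ pauliX) + (c₂ : ℂ) • (pauliY ⊗ₖ pauliY)
    + (c₃ : ℂ) • (pauliZ ⊗ₖ pauliZ))

noncomputable def ptraceB {m n : ℕ} (ρ : Matrix (Fin m × Fin n) (Fin m × Fin n) ℂ) :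
    Matrix (Fin m) (Fin m) ℂ :=
  Matrix.of fun i k => ∑ j : Fin n, ρ (i, j) (k, j)

noncomputable def ptraceA {m n : ℕ} (ρ : Matrix (Fin m × Fin n) (Fin m × Fin n) ℂ) :
    Matrix (Fin n) (Fin n) ℂ :=
  Matrix.of fun j l => ∑ i : Fin m, ρ (i, j) (i, l)

/-- Base-2 von Neumann entropy via eigenvalues (convention `0 log₂ 0 = 0`). -/
noncomputable def vnEntropy {n : Type*} [Fintype n] [DecidableEq n]
    {M : Matrix n n ℂ} (h : M.IsHermitian) : ℝ :=
  -∑ i, h.eigenvalues i * Real.logb 2 (h.eigenvalues i)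

open Polynomial

theorem Matrix.charpoly_mul_mul_eq_of_mul_eq_one {n R : Type*} [Fintype n] [DecidableEq n]
    [CommRing R] {V W : Matrix n n R} (hVW : V * W = 1) (D : Matrix n n R) :
    (V * D * W).charpoly = D.charpoly := by
  rw [charpoly_mul_comm, ← Matrix.mul_assoc, mul_eq_one_comm.mp hVW, Matrix.one_mul]

section Spectrum

variable {n ι : Type*} [Fintype n] [DecidableEq n] [Fintype ι] {M : Matrix n n ℂ}

theorem Matrix.IsHermitian.map_eigenvalues_eq_of_charpoly (hM : M.IsHermitian) (d : ι → ℝ)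
    (hd : M.charpoly = ∏ j, (X - C (d j : ℂ))) :
    Finset.univ.val.map hM.eigenvalues = Finset.univ.val.map d := by
  apply Multiset.map_injective Complex.ofReal_injective
  have hroots := hM.roots_charpoly_eq_eigenvalues
  rw [hd, roots_prod _ _ (Finset.prod_ne_zero_iff.2 fun j _ => X_sub_C_ne_zero _)] at hroots
  simpa [Multiset.map_map, Multiset.bind_singleton] using hroots.symm

theorem Matrix.PosSemidef.nonneg_of_charpoly_eq_prod (hM : M.PosSemidef) (d : ι → ℝ)
    (hd : M.charpoly = ∏ j, (X - C (d j : ℂ))) (j : ι) : 0 ≤ d j := by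
  have hmem : d j ∈ Finset.univ.val.map hM.isHermitian.eigenvalues := by
    rw [hM.isHermitian.map_eigenvalues_eq_of_charpoly d hd]
    exact Multiset.mem_map_of_mem _ (Finset.mem_univ j)
  obtain ⟨i, -, hi⟩ := Multiset.mem_map.mp hmem
  exact hi ▸ hM.eigenvalues_nonneg i

theorem vnEntropy_eq_of_charpoly (hM : M.IsHermitian) (d : ι → ℝ)
    (hd : M.charpoly = ∏ j, (X - C (d j : ℂ))) :
    vnEntropy hM = -∑ j, d j * Real.logb 2 (d j) := by
  have hmap := congrArg (Multiset.map fun x => x * Real.logb 2 x)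
    (hM.map_eigenvalues_eq_of_charpoly d hd)
  simp only [Multiset.map_map] at hmap
  rw [vnEntropy, Finset.sum_eq_multiset_sum, Finset.sum_eq_multiset_sum]
  exact congrArg (fun s : Multiset ℝ => -s.sum) hmap

theorem vnEntropy_eq_one_of_eq_half {M : Matrix (Fin 2) (Fin 2) ℂ} (hM : M.IsHermitian)
    (hhalf : M = diagonal fun _ => ((1 / 2 : ℝ) : ℂ)) : vnEntropy hM = 1 := by
  rw [vnEntropy_eq_of_charpoly hM _ (by rw [hhalf, charpoly_diagonal]), Fin.sum_univ_two,
    one_div, Real.logb_inv, Real.logb_self_eq_one one_lt_two]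
  norm_num

end Spectrum

section BellState

noncomputable def bellEigenvalues (c₁ c₂ c₃ : ℝ) : Fin 4 → ℝ :=
  ![(1 - c₁ - c₂ - c₃) / 4, (1 + c₁ - c₂ + c₃) / 4,
    (1 - c₁ + c₂ + c₃) / 4, (1 + c₁ + c₂ - c₃) / 4]

/-- Columns: the unnormalised Bell vectors `Ψ⁻, Φ⁺, Φ⁻, Ψ⁺` in the basis `|00⟩, |01⟩, |10⟩, |11⟩`,
eigenvectors of `bellDiag c₁ c₂ c₃` for `λ₀, λ₁, λ₂, λ₃`. -/
def bellBasis : Matrix (Fin 4) (Fin 4) ℂ :=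
  !![0, 1, 1, 0; 1, 0, 0, 1; -1, 0, 0, 1; 0, 1, -1, 0]

theorem bellBasis_mul_transpose : bellBasis * ((1 / 2 : ℂ) • bellBasisᵀ) = 1 := by
  ext i j
  simp only [mul_apply, Fin.sum_univ_four, Matrix.smul_apply, transpose_apply, smul_eq_mul]
  fin_cases i <;> fin_cases j <;> simp [bellBasis, one_apply] <;> norm_num

theorem bellDiag_eq_reindex (c₁ c₂ c₃ : ℝ) :
    bellDiag c₁ c₂ c₃ = reindex finProdFinEquiv.symm finProdFinEquiv.symm
      (bellBasis * diagonal (fun k => (bellEigenvalues c₁ c₂ c₃ k : ℂ)) *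
        ((1 / 2 : ℂ) • bellBasisᵀ)) := by
  ext ⟨a, b⟩ ⟨a', b'⟩
  simp only [reindex_apply, submatrix_apply, Equiv.symm_symm, mul_apply, Fin.sum_univ_four,
    Matrix.smul_apply, transpose_apply, smul_eq_mul]
  fin_cases a <;> fin_cases b <;> fin_cases a' <;> fin_cases b' <;>
    simp [bellDiag, bellBasis, bellEigenvalues, pauliX, pauliY, pauliZ, one_apply,
      finProdFinEquiv] <;> ring

theorem charpoly_bellDiag (c₁ c₂ c₃ : ℝ) :
    (bellDiag c₁ c₂ c₃).charpoly = ∏ k, (X - C (bellEigenvalues c₁ c₂ c₃ k : ℂ)) := by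
  rw [bellDiag_eq_reindex, charpoly_reindex,
    charpoly_mul_mul_eq_of_mul_eq_one bellBasis_mul_transpose, charpoly_diagonal]

theorem ptraceB_bellDiag (c₁ c₂ c₃ : ℝ) :
    ptraceB (bellDiag c₁ c₂ c₃) = diagonal fun _ => ((1 / 2 : ℝ) : ℂ) := by
  ext i k
  simp only [ptraceB, of_apply, Fin.sum_univ_two]
  fin_cases i <;> fin_cases k <;>
    simp [bellDiag, pauliX, pauliY, pauliZ, one_apply] <;> ring

theorem ptraceA_bellDiag (c₁ c₂ c₃ : ℝ) :
    ptraceA (bellDiag c₁ c₂ c₃) = diagonal fun _ => ((1 / 2 : ℝ) : ℂ) := by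
  ext i k
  simp only [ptraceA, of_apply, Fin.sum_univ_two]
  fin_cases i <;> fin_cases k <;>
    simp [bellDiag, pauliX, pauliY, pauliZ, one_apply] <;> ring

end BellState

section Entropy

theorem convexOn_mul_logb {b : ℝ} (hb : 1 ≤ b) :
    ConvexOn ℝ (Set.Ici 0) fun x => x * Real.logb b x := by
  have hconv := Real.convexOn_mul_log.smul (inv_nonneg.2 (Real.log_nonneg hb))
  refine hconv.congr fun x _ => ?_
  simp only [smul_eq_mul, Real.logb]
  ring

theorem mul_logb_div_two (y : ℝ) : y * Real.logb 2 (y / 2) = y * Real.logb 2 y - y := by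
  rcases eq_or_ne y 0 with rfl | hy
  · simp
  · rw [Real.logb_div hy two_ne_zero, Real.logb_self_eq_one one_lt_two]
    ring

theorem add_mul_logb_sub_le {x y : ℝ} (hx : 0 ≤ x) (hy : 0 ≤ y) :
    (x + y) * Real.logb 2 (x + y) - (x + y) ≤ x * Real.logb 2 x + y * Real.logb 2 y := by
  have hjensen := (convexOn_mul_logb one_le_two).2 (Set.mem_Ici.2 hx) (Set.mem_Ici.2 hy)
    (by norm_num : (0 : ℝ) ≤ 1 / 2) (by norm_num : (0 : ℝ) ≤ 1 / 2) (by norm_num)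
  simp only [smul_eq_mul] at hjensen
  rw [show 1 / 2 * x + 1 / 2 * y = (x + y) / 2 by ring] at hjensen
  linarith [mul_logb_div_two (x + y)]

noncomputable def classicalCorrelation (x : ℝ) : ℝ :=
  (1 - x) / 2 * Real.logb 2 (1 - x) + (1 + x) / 2 * Real.logb 2 (1 + x)

theorem classicalCorrelation_abs (x : ℝ) : classicalCorrelation |x| = classicalCorrelation x := by
  rcases abs_choice x with hx | hx <;> rw [hx]
  simp only [classicalCorrelation, sub_neg_eq_add, ← sub_eq_add_neg]
  ring

theorem classicalCorrelation_nonneg {x : ℝ} (hx : |x| ≤ 1) : 0 ≤ classicalCorrelation x := by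
  obtain ⟨hx₀, hx₁⟩ := abs_le.1 hx
  have hjensen := add_mul_logb_sub_le (by linarith : 0 ≤ 1 - x) (by linarith : 0 ≤ 1 + x)
  norm_num at hjensen
  unfold classicalCorrelation
  linarith

theorem classicalCorrelation_le_two_add {x a b a' b' : ℝ} (ha : 0 ≤ a) (hb : 0 ≤ b)
    (ha' : 0 ≤ a') (hb' : 0 ≤ b') (hab : a + b = (1 - x) / 2) (hab' : a' + b' = (1 + x) / 2) :
    classicalCorrelation x ≤
      2 + (a * Real.logb 2 a + b * Real.logb 2 b + a' * Real.logb 2 a' + b' * Real.logb 2 b') := by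
  have hpair := add_mul_logb_sub_le ha hb
  have hpair' := add_mul_logb_sub_le ha' hb'
  rw [hab] at hpair
  rw [hab'] at hpair'
  unfold classicalCorrelation
  linarith [mul_logb_div_two (1 - x), mul_logb_div_two (1 + x)]

end Entropy

theorem classicalCorrelation_le_bellEigenvalues {c₁ c₂ c₃ : ℝ}
    (hnonneg : ∀ k, 0 ≤ bellEigenvalues c₁ c₂ c₃ k) :
    classicalCorrelation (max |c₁| (max |c₂| |c₃|)) ≤
      2 + ∑ k, bellEigenvalues c₁ c₂ c₃ k * Real.logb 2 (bellEigenvalues c₁ c₂ c₃ k) := by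
  have h₀ := hnonneg 0; have h₁ := hnonneg 1; have h₂ := hnonneg 2; have h₃ := hnonneg 3
  simp only [bellEigenvalues, Fin.sum_univ_four, Matrix.cons_val] at h₀ h₁ h₂ h₃ ⊢
  rcases max_choice |c₁| (max |c₂| |c₃|) with hmax | hmax <;> rw [hmax]
  · rw [classicalCorrelation_abs]
    linarith [classicalCorrelation_le_two_add (x := c₁) h₀ h₂ h₁ h₃ (by ring) (by ring)]
  · rcases max_choice |c₂| |c₃| with hmax | hmax <;> rw [hmax, classicalCorrelation_abs]
    · linarith [classicalCorrelation_le_two_add (x := c₂) h₀ h₁ h₂ h₃ (by ring) (by ring)]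
    · linarith [classicalCorrelation_le_two_add (x := c₃) h₀ h₃ h₁ h₂ (by ring) (by ring)]

theorem bellDiag_mutual_information_and_classical_correlation_general (c₁ c₂ c₃ : ℝ)
    (hpsd : (bellDiag c₁ c₂ c₃).PosSemidef)
    (h : (bellDiag c₁ c₂ c₃).IsHermitian)
    (hA : (ptraceB (bellDiag c₁ c₂ c₃)).IsHermitian)
    (hB : (ptraceA (bellDiag c₁ c₂ c₃)).IsHermitian)
    (c : ℝ) (hc : c = max |c₁| (max |c₂| |c₃|)) (hc1 : c ≤ 1)
    (C I : ℝ)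
    (hC : C = (1 - c) / 2 * Real.logb 2 (1 - c) + (1 + c) / 2 * Real.logb 2 (1 + c))
    (hI : I = vnEntropy hA + vnEntropy hB - vnEntropy h)
    (lam : Fin 4 → ℝ)
    (hlam : lam = ![(1 - c₁ - c₂ - c₃) / 4, (1 + c₁ - c₂ + c₃) / 4,
                    (1 - c₁ + c₂ + c₃) / 4, (1 + c₁ + c₂ - c₃) / 4]) :
    I = 2 + ∑ k : Fin 4, lam k * Real.logb 2 (lam k) ∧ 0 ≤ C ∧ C ≤ I := by
  change lam = bellEigenvalues c₁ c₂ c₃ at hlam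
  change C = classicalCorrelation c at hC
  have hmutual : I = 2 + ∑ k, lam k * Real.logb 2 (lam k) := by
    rw [hI, hlam, vnEntropy_eq_one_of_eq_half hA (ptraceB_bellDiag c₁ c₂ c₃),
      vnEntropy_eq_one_of_eq_half hB (ptraceA_bellDiag c₁ c₂ c₃),
      vnEntropy_eq_of_charpoly h _ (charpoly_bellDiag c₁ c₂ c₃)]
    ring
  have hc0 : 0 ≤ c := hc ▸ (abs_nonneg c₁).trans (le_max_left _ _)
  refine ⟨hmutual, hC ▸ classicalCorrelation_nonneg (abs_le.2 ⟨by linarith, hc1⟩), ?_⟩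
  rw [hC, hc, hmutual, hlam]
  exact classicalCorrelation_le_bellEigenvalues
    (hpsd.nonneg_of_charpoly_eq_prod _ (charpoly_bellDiag c₁ c₂ c₃))

theorem bellDiag_mutual_information_and_classical_correlation (c₁ c₂ c₃ : ℝ)
    (hpsd : (bellDiag c₁ c₂ c₃).PosSemidef) (htr : (bellDiag c₁ c₂ c₃).trace = 1)
    (h : (bellDiag c₁ c₂ c₃).IsHermitian)
    (hA : (ptraceB (bellDiag c₁ c₂ c₃)).IsHermitian)
    (hB : (ptraceA (bellDiag c₁ c₂ c₃)).IsHermitian)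
    (c : ℝ) (hc : c = max |c₁| (max |c₂| |c₃|)) (hc1 : c ≤ 1)
    (C I : ℝ)
    (hC : C = (1 - c) / 2 * Real.logb 2 (1 - c) + (1 + c) / 2 * Real.logb 2 (1 + c))
    (hI : I = vnEntropy hA + vnEntropy hB - vnEntropy h)
    (lam : Fin 4 → ℝ)
    (hlam : lam = ![(1 - c₁ - c₂ - c₃) / 4, (1 + c₁ - c₂ + c₃) / 4,
                    (1 - c₁ + c₂ + c₃) / 4, (1 + c₁ + c₂ - c₃) / 4]) :
    I = 2 + ∑ k : Fin 4, lam k * Real.logb 2 (lam k) ∧ 0 ≤ C ∧ C ≤ I :=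
  bellDiag_mutual_information_and_classical_correlation_general c₁ c₂ c₃ hpsd h hA hB c hc hc1 C I
    hC hI lam hlam
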